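/- arXiv:2209.08720 — 7 statements merged into one kernel-verified Lean document; each statement's English description precedes it below -/
import Mathlib

section
/- If M is a subgroup of a finite group G, then M equals the intersection over all primes p dividing |G| of the subgroups M·O_{p'}(G). -/
/-! Let `K` be the intersection. For each prime `p ∣ |G|`, the index `|K : M|` divides
`|M O_{p'}(G) : M| = |O_{p'}(G) : M ∩ O_{p'}(G)|`, which is prime to `p`. So `|K : M|` divides
`|G|` but is prime to every prime divisor of `|G|`, hence is `1`. -/

namespace Subgroup

variable {G : Type*} [Group G]

theorem relIndex_sup_of_normal_right (H N : Subgroup G) [N.Normal] (hN : N.relIndex H ≠ 0) :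
    H.relIndex (H ⊔ N) = H.relIndex N := by
  have hH := relIndex_mul_relIndex (H ⊓ N) H (H ⊔ N) inf_le_left le_sup_left
  have hN' := relIndex_mul_relIndex (H ⊓ N) N (H ⊔ N) inf_le_right le_sup_right
  rw [inf_relIndex_left] at hH
  rw [inf_relIndex_right, relIndex_sup_right] at hN'
  exact Nat.eq_of_mul_eq_mul_left (Nat.pos_of_ne_zero hN) (hH.trans (hN'.symm.trans (mul_comm _ _)))

theorem relIndex_dvd_card_of_le_sup_normal [Finite G] {H K N : Subgroup G} [N.Normal]
    (hHK : H ≤ K) (hK : K ≤ H ⊔ N) : H.relIndex K ∣ Nat.card N := by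
  have hdvd : H.relIndex K ∣ H.relIndex (H ⊔ N) :=
    Dvd.intro _ (relIndex_mul_relIndex H K (H ⊔ N) hHK hK)
  rw [relIndex_sup_of_normal_right H N index_ne_zero_of_finite] at hdvd
  exact hdvd.trans (relIndex_dvd_card H N)

end Subgroup

/-- `O` is the `p'`-core of `G`: the largest normal subgroup of `G`
whose order is coprime to `p`. -/
def IsPPrimeCore (p : ℕ) {G : Type*} [Group G] (O : Subgroup G) : Prop :=
  O.Normal ∧ Nat.Coprime p (Nat.card O) ∧
    ∀ N : Subgroup G, N.Normal → Nat.Coprime p (Nat.card N) → N ≤ O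

/-- If `M` is a subgroup of a finite group `G`, then `M` equals the intersection
over all primes `p` dividing `|G|` of the subgroups `M·O_{p'}(G)`
(which equal `M ⊔ O_{p'}(G)` since `O_{p'}(G)` is normal). -/
theorem subgroup_eq_iInf_mul_pPrimeCore {G : Type*} [Group G] [Finite G]
    (M : Subgroup G) (O : ℕ → Subgroup G)
    (hO : ∀ p ∈ (Nat.card G).primeFactors, IsPPrimeCore p (O p)) :
    M = ⨅ p ∈ (Nat.card G).primeFactors, M ⊔ O p := by
  set K : Subgroup G := ⨅ p ∈ (Nat.card G).primeFactors, M ⊔ O p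
  have hMK : M ≤ K := le_iInf₂ fun _ _ => le_sup_left
  have hdvd : M.relIndex K ∣ Nat.card G :=
    (Subgroup.relIndex_dvd_index_of_le hMK).trans M.index_dvd_card
  have hcop : Nat.Coprime (M.relIndex K) (Nat.card G) := by
    refine Nat.coprime_of_dvd fun p hp hpK hpG => ?_
    have hpG' : p ∈ (Nat.card G).primeFactors :=
      Nat.mem_primeFactors.mpr ⟨hp, hpG, Nat.card_pos.ne'⟩
    obtain ⟨hnormal, hcoprime, -⟩ := hO p hpG'
    have hKO : M.relIndex K ∣ Nat.card (O p) :=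
      Subgroup.relIndex_dvd_card_of_le_sup_normal (N := O p) hMK (iInf₂_le p hpG')
    exact (Nat.Prime.coprime_iff_not_dvd hp).mp hcoprime (hpK.trans hKO)
  exact le_antisymm hMK (Subgroup.relIndex_eq_one.mp (hcop.eq_one_of_dvd hdvd))
end

section
/- Let G be a finite supersolvable group and p a prime dividing |G|. Then the quotient G/O_{p'}(G) has a normal p-subgroup N such that (G/O_{p'}(G))/N is abelian of exponent dividing p−1. -/
/-- A group is supersolvable if it has a normal series `1 = H 0 ≤ ⋯ ≤ H n = G`
with each term normal in `G` and each successive quotient cyclic (equivalently,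
each term is generated by the previous one together with a single element). -/
def IsSupersolvable (G : Type*) [Group G] : Prop :=
  ∃ (n : ℕ) (c : Fin (n + 1) → Subgroup G),
    c 0 = ⊥ ∧ c (Fin.last n) = ⊤ ∧ (∀ i, (c i).Normal) ∧
    ∀ i : Fin n, ∃ x : G, c i.succ = c i.castSucc ⊔ Subgroup.closure {x}

open scoped commutatorElement

/-!
Induction on `|G|`. A supersolvable group has a normal subgroup `B` of prime order `q`, and
`G / B` carries, by induction, a normal `p'`-subgroup `Q'` and a normal `K'` with `K' / Q'` a
`p`-group and `(G / B) / K'` abelian of exponent dividing `p - 1`. If `q ≠ p`, take preimages.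
If `q = p`, conjugation gives `G → Aut B ≅ (ZMod p)ˣ`, so intersecting with the centralizer `C`
of `B` keeps the top quotient abelian of exponent dividing `p - 1`. In `R = π⁻¹(Q') ⊓ C` the
subgroup `B` is central of `p'`-index, so by Schur–Zassenhaus `R = B × H`; then `H` is the set of
`p'`-elements of `R`, hence normal in `G`, and it contains all `p`-th powers of `R`.
Finally the `p'`-subgroup found for `G` lies in `O_{p'}(G)`, so the image of `K` in
`G / O_{p'}(G)` is a `p`-group.
-/

open Subgroup

section

variable {G : Type*} [Group G]

theorem IsSupersolvable.of_surjective {H : Type*} [Group H] {f : G →* H}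
    (hf : Function.Surjective f) (h : IsSupersolvable G) : IsSupersolvable H := by
  obtain ⟨n, c, h0, hl, hn, hs⟩ := h
  refine ⟨n, fun i => (c i).map f, ?_, ?_, fun i => (hn i).map f hf, fun i => ?_⟩
  · simp only [h0, Subgroup.map_bot]
  · simp only [hl, map_top_of_surjective f hf]
  · obtain ⟨x, hx⟩ := hs i
    refine ⟨f x, ?_⟩
    dsimp only
    rw [hx, Subgroup.map_sup, MonoidHom.map_closure, Set.image_singleton]

theorem Subgroup.Normal.zpowers_zpow {x : G} (h : (zpowers x).Normal) (k : ℤ) :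
    (zpowers (x ^ k)).Normal where
  conj_mem y hy g := by
    obtain ⟨j, rfl⟩ := mem_zpowers_iff.mp hy
    obtain ⟨m, hm⟩ := mem_zpowers_iff.mp (h.conj_mem x (mem_zpowers x) g)
    refine mem_zpowers_iff.mpr ⟨m * j, ?_⟩
    rw [← zpow_mul, ← zpow_mul, ← conj_zpow, ← hm, ← zpow_mul]
    ring_nf

theorem IsSupersolvable.exists_normal_zpowers_ne_one [Nontrivial G] (h : IsSupersolvable G) :
    ∃ x : G, x ≠ 1 ∧ (zpowers x).Normal := by
  obtain ⟨n, c, h0, hl, hn, hs⟩ := h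
  obtain ⟨i, hi, hi'⟩ : ∃ i : Fin n, c i.castSucc = ⊥ ∧ c i.succ ≠ ⊥ := by
    by_contra! hbot
    have hall : ∀ i, c i = ⊥ := fun i => Fin.induction h0 hbot i
    exact top_ne_bot (hl ▸ hall (Fin.last n))
  obtain ⟨x, hx⟩ := hs i
  rw [hi, bot_sup_eq, ← zpowers_eq_closure] at hx
  refine ⟨x, fun h1 => hi' ?_, hx ▸ hn i.succ⟩
  rw [hx, h1, zpowers_one_eq_bot]

theorem IsSupersolvable.exists_normal_prime_card [Finite G] [Nontrivial G]
    (h : IsSupersolvable G) : ∃ B : Subgroup G, B.Normal ∧ (Nat.card B).Prime := by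
  obtain ⟨x, hx, hxn⟩ := h.exists_normal_zpowers_ne_one
  obtain ⟨q, hq, hqx⟩ := Nat.exists_prime_and_dvd (mt orderOf_eq_one_iff.mp hx)
  have : Fact q.Prime := ⟨hq⟩
  obtain ⟨⟨y, hy⟩, hyq⟩ := exists_prime_orderOf_dvd_card' (G := zpowers x) q
    (by rwa [Nat.card_zpowers])
  obtain ⟨k, rfl⟩ := mem_zpowers_iff.mp hy
  refine ⟨_, hxn.zpowers_zpow k, ?_⟩
  rw [Subgroup.orderOf_mk] at hyq
  rwa [Nat.card_zpowers, hyq]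

theorem exists_coprime_card_pow_mem_of_le_center [Finite G] {p : ℕ} {B : Subgroup G}
    (hBcenter : B ≤ center G) (hB : Nat.card B = p) (hindex : p.Coprime B.index) :
    ∃ H : Subgroup G, p.Coprime (Nat.card H) ∧ (∀ g : G, g ^ p ∈ H) ∧
      ∀ g : G, p.Coprime (orderOf g) → g ∈ H := by
  have : B.Normal :=
    ⟨fun b hb g => by rw [mem_center_iff.mp (hBcenter hb) g, mul_inv_cancel_right]; exact hb⟩
  obtain ⟨H, hH⟩ := exists_right_complement'_of_coprime (N := B) (hB ▸ hindex)
  have hpow : ∀ g : G, g ^ p ∈ H := by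
    intro g
    obtain ⟨⟨b, h⟩, hbh, -⟩ := hH.existsUnique g
    have hcomm : Commute (b : G) h := ((mem_center_iff.mp (hBcenter b.2)) h).symm
    have hbp : (b : G) ^ p = 1 := by
      rw [← hB, ← coe_pow, pow_card_eq_one', coe_one]
    rw [← hbh, hcomm.mul_pow, hbp, one_mul]
    exact H.pow_mem h.2 p
  refine ⟨H, hH.symm.index_eq_card ▸ hindex, hpow, fun g hg => ?_⟩
  exact zpowers_le.mpr (hpow g) (mem_zpowers_pow_iff.mpr hg)

theorem exists_normal_coprime_card_pow_mem [Finite G] {p : ℕ} {R B : Subgroup G} [R.Normal]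
    (hBR : B ≤ R) (hcomm : ∀ r ∈ R, ∀ b ∈ B, r * b = b * r) (hB : Nat.card B = p)
    (hindex : p.Coprime (B.relIndex R)) :
    ∃ Q : Subgroup G, Q.Normal ∧ p.Coprime (Nat.card Q) ∧ ∀ r ∈ R, r ^ p ∈ Q := by
  have hcenter : B.subgroupOf R ≤ center R := fun b hb =>
    mem_center_iff.mpr fun r => Subtype.ext (hcomm r r.2 b (mem_subgroupOf.mp hb))
  have hcard : Nat.card (B.subgroupOf R) = p := by
    rw [← hB]; exact Nat.card_congr (subgroupOfEquivOfLe hBR).toEquiv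
  obtain ⟨H, hHcop, hpow, hmem⟩ := exists_coprime_card_pow_mem_of_le_center hcenter hcard hindex
  have hQ : ∀ g : G, g ∈ H.map R.subtype ↔ g ∈ R ∧ p.Coprime (orderOf g) := by
    intro g
    constructor
    · rintro ⟨r, hr, rfl⟩
      refine ⟨r.2, Nat.Coprime.coprime_dvd_right ?_ hHcop⟩
      rw [coe_subtype, Subgroup.orderOf_coe, ← Subgroup.orderOf_mk r hr]
      exact orderOf_dvd_natCard _
    · rintro ⟨hg, hcop⟩
      exact ⟨⟨g, hg⟩, hmem _ (by rwa [Subgroup.orderOf_mk]), rfl⟩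
  refine ⟨H.map R.subtype, ⟨fun g hg x => ?_⟩, ?_, fun r hr => ?_⟩
  · rw [hQ] at hg ⊢
    rw [← MulAut.conj_apply, MulEquiv.orderOf_eq]
    exact ⟨‹R.Normal›.conj_mem g hg.1 x, hg.2⟩
  · rwa [card_map_of_injective R.subtype_injective]
  · exact ⟨⟨r, hr⟩ ^ p, hpow _, rfl⟩

theorem IsCyclic.mulAut_mul_comm {H : Type*} [Group H] [IsCyclic H] (σ τ : MulAut H) :
    σ * τ = τ * σ :=
  (IsCyclic.mulAutMulEquiv H).injective (by rw [map_mul, map_mul, mul_comm])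

theorem MulAut.ker_conjNormal (B : Subgroup G) [B.Normal] :
    (MulAut.conjNormal : G →* MulAut B).ker = centralizer B := by
  ext g
  simp only [MonoidHom.mem_ker, MulEquiv.ext_iff, Subtype.ext_iff, MulAut.conjNormal_apply,
    MulAut.one_apply, mem_centralizer_iff, Subtype.forall]
  exact forall₂_congr fun b _ => mul_inv_eq_iff_eq_mul.trans eq_comm

theorem Subgroup.card_comap_of_surjective {H : Type*} [Group H] {f : G →* H}
    (hf : Function.Surjective f) (Q : Subgroup H) :
    Nat.card (Q.comap f) = Nat.card f.ker * Nat.card Q := by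
  have hker : f.ker ≤ Q.comap f := fun x hx => by simp [MonoidHom.mem_ker.mp hx]
  rw [← relIndex_bot_left, ← relIndex_bot_left,
    ← relIndex_mul_relIndex ⊥ f.ker (Q.comap f) bot_le hker, relIndex_ker,
    map_comap_eq_self_of_surjective hf]

/-- `Q` is a normal `p'`-subgroup, `K` is normal with `K / (K ⊓ Q)` a `p`-group, and `G / K` is
abelian of exponent dividing `p - 1`. -/
structure IsPPrimePAbelianPair (p : ℕ) (Q K : Subgroup G) : Prop where
  normal_left : Q.Normal
  normal_right : K.Normal
  coprime_card : p.Coprime (Nat.card Q)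
  exists_pow_mem : ∀ x ∈ K, ∃ m : ℕ, x ^ p ^ m ∈ Q
  commutator_mem : ∀ x y : G, ⁅x, y⁆ ∈ K
  pow_sub_one_mem : ∀ x : G, x ^ (p - 1) ∈ K

namespace IsPPrimePAbelianPair

variable {p : ℕ}

theorem comap {H : Type*} [Group H] {f : G →* H} (hf : Function.Surjective f)
    (hker : p.Coprime (Nat.card f.ker)) {Q K : Subgroup H} (h : IsPPrimePAbelianPair p Q K) :
    IsPPrimePAbelianPair p (Q.comap f) (K.comap f) where
  normal_left := h.normal_left.comap f
  normal_right := h.normal_right.comap f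
  coprime_card := by
    rw [card_comap_of_surjective hf]
    exact hker.mul_right h.coprime_card
  exists_pow_mem x hx := by
    obtain ⟨m, hm⟩ := h.exists_pow_mem (f x) hx
    exact ⟨m, by rwa [mem_comap, map_pow]⟩
  commutator_mem x y := by
    rw [mem_comap, map_commutatorElement]
    exact h.commutator_mem _ _
  pow_sub_one_mem x := by
    rw [mem_comap, map_pow]
    exact h.pow_sub_one_mem _

theorem exists_of_quotient_of_card_eq [Finite G] (hp : p.Prime) {B : Subgroup G} [B.Normal]
    (hB : Nat.card B = p) {Q' K' : Subgroup (G ⧸ B)} (h : IsPPrimePAbelianPair p Q' K') :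
    ∃ Q K : Subgroup G, IsPPrimePAbelianPair p Q K := by
  have : Fact p.Prime := ⟨hp⟩
  have : IsCyclic B := isCyclic_of_prime_card hB
  set π := QuotientGroup.mk' B
  have hker := MulAut.ker_conjNormal B
  have : (Q'.comap π).Normal := h.normal_left.comap π
  have : (K'.comap π).Normal := h.normal_right.comap π
  set R := Q'.comap π ⊓ centralizer B
  have hBR : B ≤ R :=
    le_inf ((QuotientGroup.ker_mk' B).symm.le.trans (π.ker_le_comap Q')) (le_centralizer B)
  have hindex : p.Coprime (B.relIndex R) := by
    rw [← QuotientGroup.ker_mk' B, relIndex_ker]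
    exact h.coprime_card.coprime_dvd_right (card_dvd_of_le (map_le_iff_le_comap.mpr inf_le_left))
  obtain ⟨Q, hQ, hQcop, hpow⟩ := exists_normal_coprime_card_pow_mem hBR
    (fun r hr b hb => (mem_centralizer_iff.mp hr.2 b hb).symm) hB hindex
  refine ⟨Q, K'.comap π ⊓ centralizer B, ⟨hQ, inferInstance, hQcop, ?_,
    fun x y => mem_inf.mpr ⟨?_, ?_⟩, fun x => mem_inf.mpr ⟨?_, ?_⟩⟩⟩
  · intro x hx
    obtain ⟨hxK, hxC⟩ := mem_inf.mp hx
    obtain ⟨m, hm⟩ := h.exists_pow_mem (π x) hxK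
    refine ⟨m + 1, ?_⟩
    rw [pow_succ, pow_mul]
    exact hpow _ (mem_inf.mpr ⟨by rwa [mem_comap, map_pow], pow_mem hxC _⟩)
  · rw [mem_comap, map_commutatorElement]
    exact h.commutator_mem _ _
  · rw [← hker, MonoidHom.mem_ker, map_commutatorElement, commutatorElement_eq_one_iff_mul_comm]
    exact IsCyclic.mulAut_mul_comm _ _
  · rw [mem_comap, map_pow]
    exact h.pow_sub_one_mem _
  · rw [← hker, MonoidHom.mem_ker, map_pow, ← Nat.totient_prime hp, ← hB,
      ← IsCyclic.card_mulAut]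
    exact pow_card_eq_one'

end IsPPrimePAbelianPair

theorem IsSupersolvable.exists_isPPrimePAbelianPair [Finite G] (hG : IsSupersolvable G) {p : ℕ}
    (hp : p.Prime) : ∃ Q K : Subgroup G, IsPPrimePAbelianPair p Q K := by
  induction h : Nat.card G using Nat.strong_induction_on generalizing G with
  | _ n ih =>
    rcases subsingleton_or_nontrivial G with _ | _
    · refine ⟨⊥, ⊤, ⟨inferInstance, inferInstance, ?_, fun x _ => ⟨0, ?_⟩,
        fun _ _ => mem_top _, fun _ => mem_top _⟩⟩
      · rw [card_bot]; exact p.coprime_one_right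
      · rw [Subsingleton.elim x 1, one_pow]; exact one_mem _
    obtain ⟨B, hBn, hBp⟩ := hG.exists_normal_prime_card
    have hlt : Nat.card (G ⧸ B) < n := by
      rw [← h, ← card_mul_index B, index, lt_mul_iff_one_lt_left Nat.card_pos]
      exact hBp.one_lt
    obtain ⟨Q', K', h'⟩ := ih _ hlt (hG.of_surjective (QuotientGroup.mk'_surjective B)) rfl
    by_cases hBcard : Nat.card B = p
    · exact h'.exists_of_quotient_of_card_eq hp hBcard
    · refine ⟨_, _, h'.comap (QuotientGroup.mk'_surjective B) ?_⟩
      rw [QuotientGroup.ker_mk']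
      exact (Nat.coprime_primes hp hBp).mpr (Ne.symm hBcard)

end

theorem quotient_pPrimeCore_mem_Hp_general {G : Type*} [Group G] [Finite G]
    (hG : IsSupersolvable G) (p : ℕ) (hp : p.Prime)
    (O : Subgroup G) [O.Normal] (hO : IsPPrimeCore p O) :
    ∃ N : Subgroup (G ⧸ O), N.Normal ∧ IsPGroup p N ∧
      (∀ x y : G ⧸ O, ⁅x, y⁆ ∈ N) ∧ (∀ x : G ⧸ O, x ^ (p - 1) ∈ N) := by
  obtain ⟨Q, K, hQK⟩ := hG.exists_isPPrimePAbelianPair hp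
  have hQO : Q ≤ O := hO.2.2 Q hQK.normal_left hQK.coprime_card
  refine ⟨K.map (QuotientGroup.mk' O), hQK.normal_right.map _ (QuotientGroup.mk'_surjective O),
    ?_, ?_, ?_⟩
  · rintro ⟨_, x, hx, rfl⟩
    obtain ⟨m, hm⟩ := hQK.exists_pow_mem x hx
    refine ⟨m, Subtype.ext ?_⟩
    rw [coe_pow, ← map_pow, QuotientGroup.mk'_apply, (QuotientGroup.eq_one_iff _).mpr (hQO hm),
      coe_one]
  · rintro ⟨x⟩ ⟨y⟩
    exact ⟨⁅x, y⁆, hQK.commutator_mem x y, map_commutatorElement _ _ _⟩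
  · rintro ⟨x⟩
    exact ⟨x ^ (p - 1), hQK.pow_sub_one_mem x, map_pow _ _ _⟩

/-- Let `G` be a finite supersolvable group and `p` a prime dividing `|G|`. Then
`G/O_{p'}(G)` has a normal `p`-subgroup `N` such that the quotient by `N` is
abelian of exponent dividing `p-1` (expressed by: all commutators and all
`(p-1)`-st powers of `G/O_{p'}(G)` lie in `N`). -/
theorem quotient_pPrimeCore_mem_Hp {G : Type*} [Group G] [Finite G]
    (hG : IsSupersolvable G) (p : ℕ) (hp : p.Prime) (hpd : p ∣ Nat.card G)
    (O : Subgroup G) [O.Normal] (hO : IsPPrimeCore p O) :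
    ∃ N : Subgroup (G ⧸ O), N.Normal ∧ IsPGroup p N ∧
      (∀ x y : G ⧸ O, ⁅x, y⁆ ∈ N) ∧ (∀ x : G ⧸ O, x ^ (p - 1) ∈ N) :=
  quotient_pPrimeCore_mem_Hp_general hG p hp O hO
end

section
/- Let F be a group, p a prime, N = [F,F]F^{p−1}, and K = [N,N]N^p. A subgroup H of F satisfies H·K = F if and only if both H·N = F and (H ∩ N)·K = N. -/
open scoped Pointwise


/-- `[G,G]G^m`: the subgroup generated by all commutators and all `m`-th powers. -/
def commPow (G : Type*) [Group G] (m : ℕ) : Subgroup G :=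
  commutator G ⊔ Subgroup.closure {x : G | ∃ g : G, g ^ m = x}

/-- `commPow` is fully invariant: any endomorphism maps it into itself. -/
lemma commPow_map_le {G : Type*} [Group G] (m : ℕ) (φ : G →* G) :
    (commPow G m).map φ ≤ commPow G m := by
  unfold commPow
  rw [Subgroup.map_sup]
  apply sup_le
  · refine le_trans ?_ le_sup_left
    rw [commutator, Subgroup.map_commutator]
    exact Subgroup.commutator_mono le_top le_top
  · refine le_trans ?_ le_sup_right
    rw [MonoidHom.map_closure]
    apply Subgroup.closure_mono
    rintro _ ⟨x, ⟨g, rfl⟩, rfl⟩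
    exact ⟨φ g, (map_pow φ g m).symm⟩

lemma commPow_normal {G : Type*} [Group G] (m : ℕ) : (commPow G m).Normal := by
  constructor
  intro n hn g
  have := commPow_map_le m ((MulAut.conj g).toMonoidHom)
  exact this ⟨n, hn, rfl⟩

/-- Let `F` be a group, `p` a prime, `N = [F,F]F^{p-1}` and `K = [N,N]N^p` (viewed
as a subgroup of `F`). A subgroup `H` of `F` satisfies `H·K = F` (i.e. `H ⊔ K = ⊤`,
as `K` is normal in `F`) if and only if both `H·N = F` and `(H ∩ N)·K = N`. -/
theorem sup_eq_top_iff_of_commPow {F : Type*} [Group F] (p : ℕ) (hp : p.Prime)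
    (H : Subgroup F) (N : Subgroup F) (hN : N = commPow F (p - 1))
    (K : Subgroup F) (hK : K = (commPow ↥N p).map N.subtype) :
    H ⊔ K = ⊤ ↔ H ⊔ N = ⊤ ∧ (H ⊓ N) ⊔ K = N := by
  have hNnorm : N.Normal := hN ▸ commPow_normal (p - 1)
  haveI := hNnorm
  have hKN : K ≤ N := by
    rw [hK]; exact Subgroup.map_subtype_le _
  have hKnorm : K.Normal := by
    constructor
    intro x hx g
    rw [hK] at hx ⊢
    obtain ⟨y, hy, rfl⟩ := hx
    have hmem : ((MulAut.conjNormal g : MulAut ↥N).toMonoidHom) y ∈ commPow ↥N p :=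
      commPow_map_le p (MulAut.conjNormal g).toMonoidHom ⟨y, hy, rfl⟩
    exact ⟨_, hmem, by simp⟩
  haveI := hKnorm
  constructor
  · intro htop
    refine ⟨by rw [eq_top_iff, ← htop]; exact sup_le_sup_left hKN H, ?_⟩
    apply le_antisymm
    · exact sup_le (inf_le_right) hKN
    · intro x hxN
      have hx : x ∈ (H : Set F) * (K : Set F) := by
        rw [← Subgroup.mul_normal]; exact htop ▸ Subgroup.mem_top x
      obtain ⟨h, hh, k, hk, rfl⟩ := hx
      have hhN : h ∈ N := by
        have : (h * k) * k⁻¹ ∈ N := N.mul_mem hxN (N.inv_mem (hKN hk))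
        simpa using this
      exact Subgroup.mul_mem _ (Subgroup.mem_sup_left ⟨hh, hhN⟩)
        (Subgroup.mem_sup_right hk)
  · rintro ⟨h1, h2⟩
    rw [eq_top_iff, ← h1, ← h2, ← sup_assoc]
    exact sup_le_sup_right (sup_le le_rfl inf_le_left) K
end

section
/- Let F be a group, d a positive integer, and H a subgroup of F. Then H surjects onto every finite abelian quotient of F of exponent dividing d if and only if for each prime p dividing d, H surjects onto every finite abelian quotient of F of exponent dividing p. (Equivalently: the image of H is all of G for every surjective homomorphism φ: F → G with G finite abelian of exponent dividing d, iff the same holds with d replaced by each prime factor p of d.) -/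
universe u

/-- A subgroup `H` of `F` surjects onto every finite abelian quotient of `F` of
exponent dividing `d` if and only if for each prime factor `p` of `d`, `H`
surjects onto every finite abelian quotient of `F` of exponent dividing `p`. -/
theorem abDense_iff_forall_prime_abDense {F : Type u} [Group F]
    (d : ℕ) (hd : 0 < d) (H : Subgroup F) :
    (∀ (G : Type u) [CommGroup G] [Finite G] (φ : F →* G),
        Function.Surjective φ → (∀ g : G, g ^ d = 1) → H.map φ = ⊤) ↔
      ∀ p : ℕ, p.Prime → p ∣ d →
        ∀ (G : Type u) [CommGroup G] [Finite G] (φ : F →* G),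
          Function.Surjective φ → (∀ g : G, g ^ p = 1) → H.map φ = ⊤ := by
  constructor
  · intro h p hp hpd G _ _ φ hsurj hexp
    refine h G φ hsurj fun g => ?_
    obtain ⟨c, rfl⟩ := hpd
    rw [pow_mul, hexp, one_pow]
  · intro h G _ _ φ hsurj hexp
    by_contra hM
    set M : Subgroup G := H.map φ with hMdef
    -- M is normal since G is commutative
    haveI : M.Normal := Subgroup.normal_of_comm M
    set Q := G ⧸ M with hQdef
    -- there is a nontrivial element of Q
    obtain ⟨g, hg⟩ : ∃ g : G, g ∉ M := by
      by_contra hc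
      push_neg at hc
      exact hM (Subgroup.eq_top_iff' M |>.mpr hc)
    have hx1 : (QuotientGroup.mk g : Q) ≠ 1 := by
      rw [Ne, QuotientGroup.eq_one_iff]; exact hg
    set x : Q := QuotientGroup.mk g with hxdef
    have hxd : x ^ d = 1 := by
      rw [hxdef, ← QuotientGroup.mk_pow, hexp, QuotientGroup.mk_one]
    have hodvd : orderOf x ∣ d := orderOf_dvd_of_pow_eq_one hxd
    have hopos : 0 < orderOf x := by
      exact orderOf_pos x
    have hone : orderOf x ≠ 1 := by
      rw [Ne, orderOf_eq_one_iff]; exact hx1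
    set p := (orderOf x).minFac with hpdef
    have hp : p.Prime := Nat.minFac_prime hone
    have hpo : p ∣ orderOf x := Nat.minFac_dvd _
    have hpd : p ∣ d := hpo.trans hodvd
    -- quotient of Q by p-th powers
    set ψ : Q →* Q := powMonoidHom p with hψdef
    set P : Subgroup Q := ψ.range with hPdef
    haveI : P.Normal := Subgroup.normal_of_comm P
    set Q' := Q ⧸ P with hQ'def
    set φ' : F →* Q' :=
      (QuotientGroup.mk' P).comp ((QuotientGroup.mk' M).comp φ) with hφ'def
    have hsurj' : Function.Surjective φ' :=
      (QuotientGroup.mk'_surjective P).comp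
        ((QuotientGroup.mk'_surjective M).comp hsurj)
    have hexp' : ∀ q : Q', q ^ p = 1 := by
      intro q
      induction q using QuotientGroup.induction_on with
      | H z =>
        rw [← QuotientGroup.mk_pow, QuotientGroup.eq_one_iff]
        exact ⟨z, rfl⟩
    have htop := h p hp hpd Q' φ' hsurj' hexp'
    -- but the image of H in Q' is trivial
    have htrivial : ∀ q : Q, ∃ r : Q, r ^ p = q := by
      intro q
      have hq : (QuotientGroup.mk q : Q') ∈ H.map φ' := htop ▸ Subgroup.mem_top _
      obtain ⟨f, hf, hfq⟩ := hq
      have hfM : φ f ∈ M := ⟨f, hf, rfl⟩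
      have : φ' f = 1 := by
        simp only [hφ'def, MonoidHom.comp_apply, QuotientGroup.mk'_apply]
        rw [(QuotientGroup.eq_one_iff (φ f)).mpr hfM, QuotientGroup.mk_one]
      rw [this] at hfq
      obtain ⟨r, hr⟩ := (QuotientGroup.eq_one_iff q).mp hfq.symm
      exact ⟨r, hr⟩
    -- so the p-th power map on Q is surjective, hence injective
    have hψsurj : Function.Surjective ψ := htrivial
    have hψinj : Function.Injective ψ :=
      (Finite.injective_iff_surjective).mpr hψsurj
    -- element of order p
    set y : Q := x ^ (orderOf x / p) with hydef
    have hyp : y ^ p = 1 := by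
      rw [hydef, ← pow_mul, Nat.div_mul_cancel hpo, pow_orderOf_eq_one]
    have hy1 : y ≠ 1 := by
      intro hy
      have hdvd : orderOf x ∣ orderOf x / p :=
        orderOf_dvd_of_pow_eq_one (hydef ▸ hy)
      have hlt : orderOf x / p < orderOf x :=
        Nat.div_lt_self hopos hp.one_lt
      have hposdiv : 0 < orderOf x / p :=
        Nat.div_pos (Nat.le_of_dvd hopos hpo) hp.pos
      exact absurd (Nat.le_of_dvd hposdiv hdvd) (not_le_of_gt hlt)
    have : ψ y = ψ 1 := by
      simp only [hψdef, powMonoidHom_apply, one_pow, hyp]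
    exact hy1 (hψinj this)
end

section
/- Let F be a group and p a prime. Suppose a subgroup H of F has the property that φ(H) = φ(F) for every homomorphism φ from F onto a finite group G having a normal abelian p-subgroup N with G/N abelian of exponent dividing p−1. Then φ(H) = φ(F) for every homomorphism φ from F onto a finite group G having a normal p-subgroup N with G/N abelian of exponent dividing p−1. -/
universe u

open Subgroup

open scoped commutatorElement

/-!
Let `N` be the normal `p`-subgroup and `φ(H) = K`. Modulo `⁅N, N⁆` the image of `N` is
abelian, so the hypothesis applied to `G ⧸ ⁅N, N⁆` gives `K ⁅N, N⁆ = G`. By the Dedekind law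
`N = (K ∩ N) ⁅N, N⁆`, and since the commutator subgroup of the nilpotent group `N` lies in its
Frattini subgroup, which consists of non-generators, `K ∩ N = N`. Hence `K ⊇ N ⊇ ⁅N, N⁆` and
`K = G`.
-/

section

variable {G : Type*} [Group G]

/-- A maximal subgroup of a nilpotent group is normal, so its quotient is cyclic. -/
theorem commutator_le_frattini [Group.IsNilpotent G] : _root_.commutator G ≤ frattini G := by
  refine le_iInf₂ fun M hM => ?_
  have : M.Normal := Group.normalizerCondition_of_isNilpotent.normal_of_coatom M hM
  obtain ⟨g, -, hg⟩ := SetLike.exists_of_lt hM.lt_top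
  refine Normal.commutator_le_of_self_sup_commutative_eq_top (H := zpowers g) (hM.2 _ ?_)
    inferInstance
  exact left_lt_sup.mpr fun h => hg (h (mem_zpowers g))

theorem Subgroup.eq_top_of_sup_commutator_eq_top [Finite G] [Group.IsNilpotent G]
    {K : Subgroup G} (h : K ⊔ _root_.commutator G = ⊤) : K = ⊤ :=
  frattini_nongenerating <| top_le_iff.mp <| h ▸ sup_le_sup_left commutator_le_frattini K

theorem Subgroup.inf_sup_eq_of_le_of_normal {N K D : Subgroup G} [D.Normal] (hDN : D ≤ N) :
    N ⊓ (K ⊔ D) = N ⊓ K ⊔ D :=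
  SetLike.coe_injective <| by rw [coe_inf, mul_normal, mul_normal, inf_mul_assoc N K D hDN]

theorem Subgroup.le_of_le_sup_commutator {N K : Subgroup G} [N.Normal] [Finite N]
    [Group.IsNilpotent N] (h : N ≤ K ⊔ ⁅N, N⁆) : N ≤ K := by
  have hN : N ⊓ K ⊔ ⁅N, N⁆ = N := by
    rw [← inf_sup_eq_of_le_of_normal N.commutator_le_self, inf_eq_left.mpr h]
  rw [← subgroupOf_eq_top]
  refine eq_top_of_sup_commutator_eq_top <| map_injective N.subtype_injective ?_
  rw [map_sup, subgroupOf_map_subtype, map_subtype_commutator, ← MonoidHom.range_eq_map,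
    range_subtype, inf_comm, hN]

theorem QuotientGroup.sup_eq_top_of_map_mk'_eq_top {N K : Subgroup G} [N.Normal]
    (h : K.map (mk' N) = ⊤) : K ⊔ N = ⊤ := by
  simpa [comap_map_eq] using congrArg (comap (mk' N)) h

theorem Subgroup.map_mk'_commutator_mul_comm (N : Subgroup G) [N.Normal]
    (x y : N.map (QuotientGroup.mk' ⁅N, N⁆)) : x * y = y * x := by
  obtain ⟨_, a, ha, rfl⟩ := x
  obtain ⟨_, b, hb, rfl⟩ := y
  refine Subtype.ext (commutatorElement_eq_one_iff_mul_comm.mp ?_)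
  rw [← map_commutatorElement, QuotientGroup.mk'_apply, QuotientGroup.eq_one_iff]
  exact commutator_mem_commutator ha hb

end

/-- If a subgroup `H` of `F` satisfies `φ(H) = φ(F)` for every surjective
homomorphism `φ` from `F` onto a finite group having a normal *abelian*
`p`-subgroup `N` with quotient abelian of exponent dividing `p-1`, then
`φ(H) = φ(F)` for every surjective homomorphism from `F` onto a finite group
having a normal `p`-subgroup `N` with quotient abelian of exponent dividing
`p-1`.  (Ab_p*Ab_{p-1}-denseness implies H_p-denseness.) -/
theorem hp_dense_of_abp_abpm1_dense {F : Type u} [Group F] (p : ℕ) (hp : p.Prime)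
    (H : Subgroup F)
    (h : ∀ (G : Type u) [Group G] [Finite G] (φ : F →* G), Function.Surjective φ →
      (∃ N : Subgroup G, N.Normal ∧ IsPGroup p N ∧ (∀ x y : ↥N, x * y = y * x) ∧
        (∀ x y : G, ⁅x, y⁆ ∈ N) ∧ (∀ x : G, x ^ (p - 1) ∈ N)) →
      H.map φ = ⊤) :
    ∀ (G : Type u) [Group G] [Finite G] (φ : F →* G), Function.Surjective φ →
      (∃ N : Subgroup G, N.Normal ∧ IsPGroup p N ∧
        (∀ x y : G, ⁅x, y⁆ ∈ N) ∧ (∀ x : G, x ^ (p - 1) ∈ N)) →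
      H.map φ = ⊤ := by
  have : Fact p.Prime := ⟨hp⟩
  rintro G _ _ φ hφ ⟨N, hN, hNp, hcomm, hpow⟩
  let π := QuotientGroup.mk' ⁅N, N⁆
  have hπ : Function.Surjective π := QuotientGroup.mk'_surjective _
  have hdense : (H.map φ).map π = ⊤ := by
    rw [map_map]
    refine h _ (π.comp φ) (hπ.comp hφ) ⟨N.map π, hN.map π hπ, hNp.map π,
      N.map_mk'_commutator_mul_comm, fun x y => ?_, fun x => ?_⟩
    · obtain ⟨a, rfl⟩ := hπ x
      obtain ⟨b, rfl⟩ := hπ y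
      exact map_commutatorElement π a b ▸ mem_map_of_mem π (hcomm a b)
    · obtain ⟨a, rfl⟩ := hπ x
      exact map_pow π a _ ▸ mem_map_of_mem π (hpow a)
  have hsup : H.map φ ⊔ ⁅N, N⁆ = ⊤ := QuotientGroup.sup_eq_top_of_map_mk'_eq_top hdense
  have : Group.IsNilpotent N := hNp.isNilpotent
  have hNK : N ≤ H.map φ := le_of_le_sup_commutator (hsup ▸ le_top)
  rw [eq_top_iff, ← hsup]
  exact sup_le le_rfl (N.commutator_le_self.trans hNK)
end

section
/- Let G be a finite group in which every chief factor is cyclic (i.e., G is supersolvable). Then for every subgroup M of G and every g ∈ G, if g ∈ M·O_{p'}(G) for all primes p dividing |G|, then g ∈ M. -/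
/-- Let `G` be a finite supersolvable group. For every subgroup `M` of `G` and
every `g ∈ G`, if `g ∈ M·O_{p'}(G)` (i.e. `g ∈ M ⊔ O_{p'}(G)`, since `O_{p'}(G)`
is normal) for all primes `p` dividing `|G|`, then `g ∈ M`. -/
theorem mem_of_forall_mem_sup_pPrimeCore {G : Type*} [Group G] [Finite G]
    (hG : IsSupersolvable G) (O : ℕ → Subgroup G)
    (hO : ∀ p ∈ (Nat.card G).primeFactors, IsPPrimeCore p (O p))
    (M : Subgroup G) (g : G)
    (hg : ∀ p ∈ (Nat.card G).primeFactors, g ∈ M ⊔ O p) : g ∈ M := by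
  classical
  set K : Subgroup G := M ⊔ Subgroup.closure {g} with hK
  have hMK : M ≤ K := le_sup_left
  have hgK : g ∈ K := Subgroup.mem_sup_right (Subgroup.subset_closure rfl)
  have hKle : ∀ p ∈ (Nat.card G).primeFactors, K ≤ M ⊔ O p := by
    intro p hp
    exact sup_le le_sup_left ((Subgroup.closure_le _).mpr (by
      simpa using hg p hp))
  -- d is the index of M in K
  set m : Subgroup K := M.subgroupOf K with hm
  set d : ℕ := m.index with hd
  have hd0 : d ≠ 0 := Subgroup.index_ne_zero_of_finite
  -- key: every prime factor of d leads to a contradiction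
  have hd1 : d = 1 := by
    by_contra hne
    obtain ⟨q, hqprime, hqd⟩ := Nat.exists_prime_and_dvd hne
    -- d divides card K which divides card G
    have hdK : d ∣ Nat.card K := Dvd.intro_left _ (Subgroup.card_mul_index m)
    have hKG : Nat.card K ∣ Nat.card G := Subgroup.card_subgroup_dvd_card K
    have hqG : q ∈ (Nat.card G).primeFactors := by
      rw [Nat.mem_primeFactors]
      exact ⟨hqprime, hqd.trans (hdK.trans hKG), Nat.card_pos.ne'⟩
    obtain ⟨hnorm, hcop, -⟩ := hO q hqG
    have : (O q).Normal := hnorm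
    set n : Subgroup K := (O q).subgroupOf K with hn
    have hnn : n.Normal := Subgroup.normal_subgroupOf
    -- m ⊔ n = ⊤ inside K
    have hsup : m ⊔ n = ⊤ := by
      rw [eq_top_iff]
      rintro ⟨x, hxK⟩ -
      have hx : x ∈ (↑(M ⊔ O q) : Set G) := hKle q hqG hxK
      rw [Subgroup.mul_normal M (O q)] at hx
      obtain ⟨a, ha, b, hb, hab⟩ := hx
      have haK : a ∈ K := hMK ha
      have hbK : b ∈ K := by
        have : b = a⁻¹ * x := by rw [← hab]; group
        rw [this]; exact mul_mem (inv_mem haK) hxK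
      have : (⟨x, hxK⟩ : K) = ⟨a, haK⟩ * ⟨b, hbK⟩ := by
        ext; simpa using hab.symm
      rw [this]
      exact mul_mem (Subgroup.mem_sup_left (show (⟨a, haK⟩ : K) ∈ m from ha))
        (Subgroup.mem_sup_right (show (⟨b, hbK⟩ : K) ∈ n from hb))
    -- d divides card n
    have hcard : Nat.card m * m.index = Nat.card K := Subgroup.card_mul_index m
    have hcard' : Nat.card n * n.index = Nat.card K := Subgroup.card_mul_index n
    have hnidx : n.index = n.relIndex m := by
      rw [← Subgroup.relIndex_top_right, ← hsup, Subgroup.relIndex_sup_right]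
    have hrel_dvd : n.relIndex m ∣ Nat.card m := Subgroup.index_dvd_card _
    have hd_dvd_n : d ∣ Nat.card n := by
      obtain ⟨c, hc⟩ := hrel_dvd
      have hrel0 : 0 < n.relIndex m := Nat.pos_of_ne_zero Subgroup.index_ne_zero_of_finite
      have key : n.relIndex m * Nat.card n = n.relIndex m * (c * d) :=
        calc n.relIndex m * Nat.card ↥n = Nat.card ↥n * n.index := by rw [hnidx]; ring
        _ = Nat.card ↥m * m.index := by rw [hcard, hcard']
        _ = n.relIndex m * (c * d) := by rw [hc, ← hd]; ring
      exact (Nat.eq_of_mul_eq_mul_left hrel0 key) ▸ dvd_mul_left d c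
    -- card n divides card (O q)
    have hn_dvd : Nat.card n ∣ Nat.card (O q) := by
      have h1 : Nat.card n = Nat.card (n.map K.subtype) :=
        Nat.card_congr (Subgroup.equivMapOfInjective n K.subtype K.subtype_injective).toEquiv
      have h2 : n.map K.subtype ≤ O q := by
        rw [hn, Subgroup.subgroupOf_map_subtype]
        exact inf_le_left
      rw [h1]
      exact Subgroup.card_dvd_of_le h2
    have hq_dvd : q ∣ Nat.card (O q) := hqd.trans (hd_dvd_n.trans hn_dvd)
    exact hqprime.one_lt.ne' (hcop.eq_one_of_dvd hq_dvd)
  have : m = ⊤ := Subgroup.index_eq_one.mp hd1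
  have : (⟨g, hgK⟩ : K) ∈ m := this ▸ Subgroup.mem_top _
  exact this
end

section
/- Every finite group G with a normal p-subgroup N such that G/N is abelian of exponent dividing p−1 is supersolvable. -/
open Polynomial Subgroup

open scoped IsMulCommutative commutatorElement

namespace Module.End

variable {K V : Type*} [Field K] [Fintype K] [AddCommGroup V] [Module K V] [FiniteDimensional K V]

theorem exists_hasEigenvalue_of_pow_card_eq_self [Nontrivial V] {f : End K V}
    (hf : f ^ Fintype.card K = f) : ∃ a, f.HasEigenvalue a := by
  have hq : 1 < Fintype.card K := Fintype.one_lt_card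
  have hsplit : (X ^ Fintype.card K - X : K[X]).Splits := by
    rw [splits_iff_card_roots, FiniteField.roots_X_pow_card_sub_X,
      FiniteField.X_pow_card_sub_X_natDegree_eq K hq]
    rfl
  have hdvd : minpoly K f ∣ X ^ Fintype.card K - X :=
    minpoly.dvd K f (by simp [hf])
  obtain ⟨a, ha⟩ := (hsplit.of_dvd (FiniteField.X_pow_card_sub_X_ne_zero K hq) hdvd)
    |>.exists_eval_eq_zero (minpoly.degree_pos (Algebra.IsIntegral.isIntegral f)).ne'
  exact ⟨a, hasEigenvalue_of_isRoot ha⟩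

theorem exists_common_eigenvector_of_pow_card_eq_self [Nontrivial V] {ι : Type*}
    (f : ι → End K V) (hcomm : ∀ i j, Commute (f i) (f j))
    (hf : ∀ i, f i ^ Fintype.card K = f i) :
    ∃ v ≠ 0, ∀ i, ∃ a : K, f i v = a • v := by
  obtain ⟨U, ⟨hU, hUinv⟩, hUmin⟩ := exists_minimal_of_wellFoundedLT
    (fun U : Submodule K V ↦ U ≠ ⊥ ∧ ∀ i, ∀ x ∈ U, f i x ∈ U) ⟨⊤, top_ne_bot, by simp⟩
  -- `U ⊓ (f i).eigenspace a` is again invariant, so by minimality each `f i` is a scalar on `U`.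
  have hUeigen (i : ι) : ∃ a, U ≤ (f i).eigenspace a := by
    have : Nontrivial U := Submodule.nontrivial_iff_ne_bot.mpr hU
    obtain ⟨a, ha⟩ := exists_hasEigenvalue_of_pow_card_eq_self (f := (f i).restrict (hUinv i))
      (by rw [pow_restrict]; congr 1; exact hf i)
    obtain ⟨u, hu, hu0⟩ := ha.exists_hasEigenvector
    refine ⟨a, (le_inf_iff.mp (hUmin ⟨?_, fun j x hx ↦ ⟨hUinv j x hx.1, ?_⟩⟩ inf_le_left)).2⟩
    · refine (Submodule.ne_bot_iff _).mpr ⟨u, ⟨u.2, ?_⟩, by simpa using hu0⟩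
      exact eigenspace_restrict_le_eigenspace _ _ _ ⟨u, hu, rfl⟩
    · change f j x ∈ (f i).eigenspace a
      rw [mem_eigenspace_iff, ← Module.End.mul_apply, (hcomm i j).eq, Module.End.mul_apply,
        mem_eigenspace_iff.mp hx.2, map_smul]
  obtain ⟨v, hvU, hv0⟩ := Submodule.exists_mem_ne_zero_of_ne_bot hU
  refine ⟨v, hv0, fun i ↦ ?_⟩
  obtain ⟨a, ha⟩ := hUeigen i
  exact ⟨a, mem_eigenspace_iff.mp (ha hvU)⟩

end Module.End

namespace Subgroup

variable {G : Type*} [Group G]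

theorem normal_zpowers_of_forall_conj_mem {z : G} (hz : ∀ g, g * z * g⁻¹ ∈ zpowers z) :
    (zpowers z).Normal where
  conj_mem x hx g := by
    obtain ⟨k, rfl⟩ := mem_zpowers_iff.mp hx
    rw [← conj_zpow]
    exact zpow_mem (hz g) k

/-- `Ω₁(Z(N))`, viewed as a subgroup of `G`. -/
def omegaOneCenter (N : Subgroup G) (p : ℕ) : Subgroup G where
  carrier := {x | x ∈ N ∧ x ∈ centralizer N ∧ x ^ p = 1}
  one_mem' := ⟨N.one_mem, (centralizer (N : Set G)).one_mem, one_pow p⟩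
  mul_mem' {x y} := fun ⟨hxN, hxC, hx⟩ ⟨hyN, hyC, hy⟩ ↦
    have hxy : Commute x y := mem_centralizer_iff.mp hyC x hxN
    ⟨N.mul_mem hxN hyN, (centralizer (N : Set G)).mul_mem hxC hyC,
      by rw [hxy.mul_pow, hx, hy, one_mul]⟩
  inv_mem' := fun ⟨hxN, hxC, hx⟩ ↦
    ⟨N.inv_mem hxN, (centralizer (N : Set G)).inv_mem hxC, by rw [inv_pow, hx, inv_one]⟩

variable (N : Subgroup G) (p : ℕ)

instance : IsMulCommutative (N.omegaOneCenter p) :=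
  ⟨⟨fun a b ↦ Subtype.ext (mem_centralizer_iff.mp b.2.2.1 _ a.2.1)⟩⟩

instance [N.Normal] : (N.omegaOneCenter p).Normal where
  conj_mem x := fun ⟨hxN, hxC, hx⟩ g ↦
    ⟨‹N.Normal›.conj_mem x hxN g, normal_centralizer.conj_mem x hxC g,
      by rw [conj_pow, hx, mul_one, mul_inv_cancel]⟩

instance : Module (ZMod p) (Additive (N.omegaOneCenter p)) :=
  AddCommGroup.zmodModule fun x ↦ Additive.toMul.injective (Subtype.ext x.toMul.2.2.2)

def conjEnd [N.Normal] : G →* Module.End (ZMod p) (Additive (N.omegaOneCenter p)) where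
  toFun g := (MonoidHom.toAdditive (MulAut.conjNormal g).toMonoidHom).toZModLinearMap p
  map_one' := by ext; simp
  map_mul' _ _ := by ext; simp [mul_assoc]

@[simp]
theorem coe_toMul_conjEnd_apply [N.Normal] (g : G) (v : Additive (N.omegaOneCenter p)) :
    ((conjEnd N p g v).toMul : G) = g * v.toMul * g⁻¹ := rfl

theorem conjEnd_eq_one_of_mem [N.Normal] {n : G} (hn : n ∈ N) : conjEnd N p n = 1 := by
  ext v
  simp [mem_centralizer_iff.mp v.toMul.2.2.1 n hn]

theorem omegaOneCenter_ne_bot [Finite G] {p : ℕ} [Fact p.Prime] {N : Subgroup G}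
    (hNp : IsPGroup p N) (hN : N ≠ ⊥) : N.omegaOneCenter p ≠ ⊥ := by
  have : Nontrivial N := (nontrivial_iff_ne_bot N).mpr hN
  have := hNp.center_nontrivial
  obtain ⟨c, hc⟩ := exists_prime_orderOf_dvd_card' p
    ((hNp.to_subgroup (center N)).card_eq_or_dvd.resolve_left Finite.one_lt_card.ne')
  refine ne_bot_iff_exists_ne_one.mpr
    ⟨⟨c, (c : N).2, mem_centralizer_iff.mpr fun h hh ↦ ?_, ?_⟩, ?_⟩
  · exact congrArg Subtype.val (mem_center_iff.mp c.2 ⟨h, hh⟩)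
  · simp [← Subgroup.coe_pow, ← hc, pow_orderOf_eq_one]
  · intro h
    have hc1 : c = 1 := Subtype.ext (Subtype.ext (congrArg Subtype.val h :))
    exact (Fact.out : p.Prime).one_lt.ne' (by rw [← hc, hc1, orderOf_one])

theorem exists_ne_one_normal_zpowers [Finite G] [Nontrivial G] {p : ℕ} (hp : p.Prime)
    {N : Subgroup G} [N.Normal] (hNp : IsPGroup p N) (hcomm : ∀ x y : G, ⁅x, y⁆ ∈ N)
    (hexp : ∀ x : G, x ^ (p - 1) ∈ N) : ∃ z : G, z ≠ 1 ∧ (zpowers z).Normal := by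
  rcases eq_or_ne N ⊥ with rfl | hN
  · obtain ⟨z, hz⟩ := exists_ne (1 : G)
    refine ⟨z, hz, normal_zpowers_of_forall_conj_mem fun g ↦ ?_⟩
    have hgz : g * z * g⁻¹ = z := by
      simpa [commutatorElement_def, mul_inv_eq_one] using hcomm g z
    rw [hgz]
    exact mem_zpowers z
  have : Fact p.Prime := ⟨hp⟩
  have : Nontrivial (N.omegaOneCenter p) :=
    (nontrivial_iff_ne_bot _).mpr (omegaOneCenter_ne_bot hNp hN)
  have hcomm' (g h : G) : Commute (conjEnd N p g) (conjEnd N p h) := by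
    have hgh : g * h = ⁅g, h⁆ * (h * g) := by group
    rw [Commute, SemiconjBy, ← map_mul, ← map_mul, hgh, map_mul,
      conjEnd_eq_one_of_mem N p (hcomm g h), one_mul]
  have hpow (g : G) : conjEnd N p g ^ Fintype.card (ZMod p) = conjEnd N p g := by
    rw [ZMod.card, ← pow_sub_one_mul hp.ne_zero, ← map_pow,
      conjEnd_eq_one_of_mem N p (hexp g), one_mul]
  obtain ⟨v, hv, hv_eigen⟩ :=
    Module.End.exists_common_eigenvector_of_pow_card_eq_self (conjEnd N p) hcomm' hpow
  refine ⟨v.toMul, ?_, normal_zpowers_of_forall_conj_mem fun g ↦ ?_⟩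
  · exact fun h ↦ hv (Additive.toMul.injective (Subtype.ext h))
  · obtain ⟨a, ha⟩ := hv_eigen g
    rw [← coe_toMul_conjEnd_apply, ha, ← ZMod.natCast_zmod_val a, Nat.cast_smul_eq_nsmul,
      toMul_nsmul, Subgroup.coe_pow]
    exact pow_mem (mem_zpowers _) _

end Subgroup

namespace IsSupersolvable

theorem of_subsingleton (G : Type*) [Group G] [Subsingleton G] : IsSupersolvable G :=
  ⟨0, fun _ ↦ ⊥, rfl, Subsingleton.elim _ _, fun _ ↦ normal_bot, fun i ↦ i.elim0⟩

theorem of_surjective_of_ker_eq_zpowers {G Q : Type*} [Group G] [Group Q] {f : G →* Q}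
    (hf : Function.Surjective f) {z : G} (hker : f.ker = zpowers z) (hQ : IsSupersolvable Q) :
    IsSupersolvable G := by
  obtain ⟨n, c, h0, hlast, hnorm, hstep⟩ := hQ
  have hcomap (A : Subgroup Q) (x : G) :
      (A ⊔ closure {f x}).comap f = A.comap f ⊔ closure {x} := by
    have hmap : (A.comap f ⊔ closure {x}).map f = A ⊔ closure {f x} := by
      rw [Subgroup.map_sup, map_comap_eq_self_of_surjective hf, MonoidHom.map_closure,
        Set.image_singleton]
    rw [← hmap, comap_map_eq, sup_eq_left.mpr ((MonoidHom.ker_le_comap f A).trans le_sup_left)]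
  refine ⟨n + 1, Fin.cons ⊥ fun i ↦ (c i).comap f, rfl, ?_, Fin.cases normal_bot fun i ↦ ?_,
    Fin.cases ⟨z, ?_⟩ fun i ↦ ?_⟩
  · rw [← Fin.succ_last, Fin.cons_succ, hlast, comap_top]
  · exact (hnorm i).comap f
  · rw [Fin.cons_succ, h0, MonoidHom.comap_bot, hker, zpowers_eq_closure, Fin.castSucc_zero,
      Fin.cons_zero, bot_sup_eq]
  · obtain ⟨y, hy⟩ := hstep i
    obtain ⟨x, rfl⟩ := hf y
    exact ⟨x, by rw [Fin.cons_succ, hy, hcomap, ← Fin.succ_castSucc, Fin.cons_succ]⟩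

end IsSupersolvable

/-- Every finite group with a normal `p`-subgroup `N` (for a prime `p`) such that
`G/N` is abelian of exponent dividing `p-1` (expressed by: all commutators and
all `(p-1)`-st powers lie in `N`) is supersolvable. -/
theorem isSupersolvable_of_normal_pSubgroup {G : Type*} [Group G] [Finite G]
    (p : ℕ) (hp : p.Prime) (N : Subgroup G) (hN : N.Normal) (hNp : IsPGroup p N)
    (hcomm : ∀ x y : G, ⁅x, y⁆ ∈ N) (hexp : ∀ x : G, x ^ (p - 1) ∈ N) :
    IsSupersolvable G := by
  induction h : Nat.card G using Nat.strong_induction_on generalizing G with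
  | _ n ih =>
  rcases subsingleton_or_nontrivial G with hG | hG
  · exact .of_subsingleton G
  obtain ⟨z, hz, hzn⟩ := exists_ne_one_normal_zpowers hp hNp hcomm hexp
  let f := QuotientGroup.mk' (zpowers z)
  have hf : Function.Surjective f := QuotientGroup.mk'_surjective _
  have hcard : Nat.card (G ⧸ zpowers z) < n := by
    rw [← h, ← (zpowers z).index_mul_card]
    exact lt_mul_of_one_lt_right (Nat.pos_of_ne_zero (zpowers z).index_ne_zero_of_finite)
      ((zpowers z).one_lt_card_iff_ne_bot.mpr (zpowers_ne_bot.mpr hz))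
  refine .of_surjective_of_ker_eq_zpowers hf (QuotientGroup.ker_mk' _)
    (ih _ hcard (N.map f) (hN.map f hf) (hNp.map f) ?_ ?_ rfl)
  · exact hf.forall₂.mpr fun x y ↦ ⟨_, hcomm x y, map_commutatorElement f x y⟩
  · exact hf.forall.mpr fun x ↦ ⟨_, hexp x, map_pow f x _⟩
end
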